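/- Let (a_n)_{n≥3} with a_n = 1/(n log n). If (T_j)_{j≥1} are independent random variables with P(T_j = ⌊(j+2)√(log(j+2))⌋ + 1) = a_{j+2} and P(T_j = 1) = 1 − a_{j+2}, then almost surely limsup_{j→∞} (T_j)/j = +∞. Consequently, setting τ_j = T_1 + … + T_j, almost surely for every ε, R > 0 there is j₀ with j₀ < ε/(R+1)·τ_{j₀}. -/

import Mathlib

open MeasureTheory Set Filter
open scoped ENNReal

/-
With `v j = ⌊(j+2)√(log(j+2))⌋ + 1`, the events `{T_j = v_j}` are independent and have
probabilities `1/((j+2) log(j+2))`, whose sum diverges by Cauchy condensation. By the second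
Borel–Cantelli lemma almost surely `T_j = v_j` for infinitely many `j`, and `v_j / j ≥ √(log(j+2))`
is unbounded. A single large `T_j` then already makes `τ_j = T_1 + ⋯ + T_j` exceed any multiple
of `j`.
-/

open ProbabilityTheory

theorem ProbabilityTheory.iIndepFun.iIndepSet_preimage {Ω ι : Type*} {β : ι → Type*}
    [MeasurableSpace Ω] {mβ : ∀ i, MeasurableSpace (β i)} {μ : Measure Ω} {f : ∀ i, Ω → β i}
    (hf : iIndepFun f μ) {t : ∀ i, Set (β i)} (ht : ∀ i, MeasurableSet (t i))
    (hfm : ∀ i, Measurable (f i)) : iIndepSet (fun i => f i ⁻¹' t i) μ :=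
  hf.iIndep.iIndepSets'.iIndepSet_of_mem
    (π := fun i => {s | MeasurableSet[(mβ i).comap (f i)] s}) (fun i => ⟨t i, ht i, rfl⟩)
    fun i => hfm i (ht i)

theorem ProbabilityTheory.ae_frequently_mem_of_iIndepSet {Ω : Type*} [MeasurableSpace Ω]
    {μ : Measure Ω} {s : ℕ → Set Ω} (hsm : ∀ n, MeasurableSet (s n)) (hs : iIndepSet s μ)
    (hs' : ∑' n, μ (s n) = ∞) : ∀ᵐ ω ∂μ, ∃ᶠ n in atTop, ω ∈ s n := by
  have := hs.isProbabilityMeasure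
  have h := (mem_ae_iff_prob_eq_one (MeasurableSet.measurableSet_limsup hsm)).2
    (measure_limsup_eq_one hsm hs hs')
  filter_upwards [h] with ω hω using mem_limsup_iff_frequently_mem.1 hω

open Real

theorem not_summable_one_div_natCast_mul_log :
    ¬ Summable fun n : ℕ => 1 / ((n : ℝ) * log n) := by
  have h_nonneg : 0 ≤ᶠ[atTop] fun n : ℕ => 1 / ((n : ℝ) * log n) :=
    Eventually.of_forall fun n => by simp only [Pi.zero_apply]; positivity
  have h_anti : ∀ᶠ n : ℕ in atTop,
      1 / (((n + 1 : ℕ) : ℝ) * log (n + 1 : ℕ)) ≤ 1 / ((n : ℝ) * log n) := by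
    filter_upwards [eventually_ge_atTop 2] with n hn
    have hn' : (2 : ℝ) ≤ n := by exact_mod_cast hn
    have hlog : 0 < log n := log_pos (by linarith)
    gcongr <;> linarith
  rw [← summable_condensed_iff_of_eventually_nonneg h_nonneg h_anti]
  have h_condensed : (fun k : ℕ => (2 : ℝ) ^ k * (1 / (((2 ^ k : ℕ) : ℝ) * log (2 ^ k : ℕ))))
      = fun k : ℕ => (log 2)⁻¹ * (1 / (k : ℝ)) := by
    ext k
    rcases Nat.eq_zero_or_pos k with rfl | hk
    · simp
    · have : (0 : ℝ) < log 2 := log_pos one_lt_two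
      push_cast
      rw [log_pow]
      field_simp
  rw [h_condensed, summable_mul_left_iff (by positivity)]
  exact Real.not_summable_one_div_natCast

theorem not_summable_one_div_add_two_mul_log :
    ¬ Summable fun n : ℕ => 1 / (((n : ℝ) + 2) * log ((n : ℝ) + 2)) := by
  have h := not_summable_one_div_natCast_mul_log
  rw [← summable_nat_add_iff 2] at h
  exact_mod_cast h

theorem ENNReal.tsum_eq_top_of_eventually_eq_ofReal {f : ℕ → ℝ≥0∞} {g : ℕ → ℝ}
    (hg_nonneg : ∀ᶠ n in atTop, 0 ≤ g n) (hfg : ∀ᶠ n in atTop, f n = ENNReal.ofReal (g n))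
    (hg : ¬ Summable g) : ∑' n, f n = ∞ := by
  by_contra hf
  refine hg ((ENNReal.summable_toReal hf).congr_atTop ?_)
  filter_upwards [hg_nonneg, hfg] with n hn hfn
  rw [hfn, ENNReal.toReal_ofReal hn]

theorem tendsto_floor_mul_sqrt_log_add_one_div :
    Tendsto (fun j : ℕ => ((⌊((j : ℝ) + 2) * √(log ((j : ℝ) + 2))⌋₊ + 1 : ℕ) : ℝ) / j)
      atTop atTop := by
  have h_sqrt_log : Tendsto (fun j : ℕ => √(log ((j : ℝ) + 2))) atTop atTop :=
    tendsto_sqrt_atTop.comp <| tendsto_log_atTop.comp <|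
      tendsto_atTop_add_const_right _ 2 tendsto_natCast_atTop_atTop
  refine tendsto_atTop_mono' _ ?_ h_sqrt_log
  filter_upwards [eventually_gt_atTop 0] with j hj
  have hj' : (0 : ℝ) < j := by exact_mod_cast hj
  rw [le_div_iff₀ hj']
  calc √(log ((j : ℝ) + 2)) * j ≤ ((j : ℝ) + 2) * √(log ((j : ℝ) + 2)) := by
        rw [mul_comm]; gcongr; linarith
    _ ≤ _ := by push_cast; exact (Nat.lt_floor_add_one _).le

theorem exists_lt_mul_sum_Icc_of_frequently_lt_div {f : ℕ → ℝ} (hf : ∀ i, 0 ≤ f i)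
    (h : ∀ C : ℝ, ∃ᶠ j in atTop, C < f j / j) {c : ℝ} (hc : 0 < c) :
    ∃ j : ℕ, 1 ≤ j ∧ (j : ℝ) < c * ∑ i ∈ Finset.Icc 1 j, f i := by
  obtain ⟨j, hjC, hj⟩ := ((h c⁻¹).and_eventually (eventually_ge_atTop 1)).exists
  have hj' : (0 : ℝ) < j := by exact_mod_cast hj
  refine ⟨j, hj, ?_⟩
  rw [lt_div_iff₀ hj', inv_mul_lt_iff₀ hc] at hjC
  calc (j : ℝ) < c * f j := hjC
    _ ≤ c * ∑ i ∈ Finset.Icc 1 j, f i := by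
        gcongr
        exact Finset.single_le_sum (fun i _ => hf i) (Finset.mem_Icc.2 ⟨hj, le_rfl⟩)

theorem stmt15 {E : Type*} [MeasurableSpace E] (P : Measure E)
    (T : ℕ → E → ℕ) (hmeas : ∀ j, Measurable (T j))
    (hindep : ProbabilityTheory.iIndepFun T P)
    (hbig : ∀ j : ℕ, 1 ≤ j →
      P {e | T j e = Nat.floor (((j : ℝ) + 2) * Real.sqrt (Real.log ((j : ℝ) + 2))) + 1}
        = ENNReal.ofReal (1 / (((j : ℝ) + 2) * Real.log ((j : ℝ) + 2)))) :
    ∀ᵐ e ∂ P,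
      (∀ C : ℝ, ∃ᶠ j in Filter.atTop, C < (T j e : ℝ) / j) ∧
      (∀ ε R : ℝ, 0 < ε → 0 < R → ∃ j₀ : ℕ, 1 ≤ j₀ ∧
        (j₀ : ℝ) < ε / (R + 1) * ∑ i ∈ Finset.Icc 1 j₀, (T i e : ℝ)) := by
  set v : ℕ → ℕ := fun j => Nat.floor (((j : ℝ) + 2) * Real.sqrt (Real.log ((j : ℝ) + 2))) + 1
  have h_prob_nonneg (j : ℕ) : 0 ≤ 1 / (((j : ℝ) + 2) * log ((j : ℝ) + 2)) := by
    have : 0 ≤ log ((j : ℝ) + 2) := log_nonneg (by linarith [j.cast_nonneg (α := ℝ)])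
    positivity
  have h_div : ∑' j, P (T j ⁻¹' {v j}) = ∞ :=
    ENNReal.tsum_eq_top_of_eventually_eq_ofReal (.of_forall h_prob_nonneg)
      ((eventually_ge_atTop 1).mono hbig) not_summable_one_div_add_two_mul_log
  have h_often := ae_frequently_mem_of_iIndepSet (fun j => hmeas j (measurableSet_singleton _))
    (hindep.iIndepSet_preimage (fun j => measurableSet_singleton (v j)) hmeas) h_div
  filter_upwards [h_often] with e he
  have h_unbdd (C : ℝ) : ∃ᶠ j in atTop, C < (T j e : ℝ) / j :=
    (he.and_eventually (tendsto_floor_mul_sqrt_log_add_one_div.eventually_gt_atTop C)).mono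
      fun j ⟨hj, hC⟩ => by rwa [show T j e = v j from hj]
  exact ⟨h_unbdd, fun ε R hε hR =>
    exists_lt_mul_sum_Icc_of_frequently_lt_div (fun i => Nat.cast_nonneg _) h_unbdd
      (by positivity)⟩
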